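/- Let T, Λ ∈ ℝ^{m×m} be diagonal with positive diagonals, C ∈ ℝ^{m×n}, H ∈ ℝ^{n×n} symmetric positive definite, A ∈ ℝ^{p×n} with full row rank. Then the 4×4 block Newton matrix K = [[H, −Aᵀ, −Cᵀ, 0], [−A, 0, 0, 0], [−C, 0, 0, I], [0, 0, T, Λ]] is nonsingular. -/

import Mathlib

/-!
Eliminating the last two block rows is a Schur complement step: the block `[[0, 1], [T, Λ]]` is
invertible with inverse `[[-T⁻¹Λ, T⁻¹], [1, 0]]`, and the complement is the KKT matrix
`[[M, -Aᵀ], [-A, 0]]` with `M = H + Cᵀ T⁻¹ Λ C` positive definite. A second Schur complement, now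
around `M`, reduces this to `-(A M⁻¹ Aᵀ)`, which is negative definite because the rows of `A` are
linearly independent.
-/

open Matrix

namespace Matrix

theorem linearIndependent_row_of_rank_eq_card {K m n : Type*} [Field K] [Fintype m] [Fintype n]
    {A : Matrix m n K} (hA : A.rank = Fintype.card m) : LinearIndependent K A.row :=
  linearIndependent_iff_card_eq_finrank_span.2 (hA.symm.trans A.rank_eq_finrank_span_row)

theorem det_fromBlocks_neg_transpose_ne_zero {n p : Type*} [Fintype n] [DecidableEq n]
    [Fintype p] [DecidableEq p] {M : Matrix n n ℝ} (hM : M.PosDef) {A : Matrix p n ℝ}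
    (hA : Function.Injective A.vecMul) : (fromBlocks M (-Aᵀ) (-A) 0).det ≠ 0 := by
  let := hM.isUnit.invertible
  have hS : (A * M⁻¹ * Aᵀ).PosDef := by
    simpa using hM.inv.mul_mul_conjTranspose_same hA
  rw [det_fromBlocks₁₁, invOf_eq_nonsing_inv]
  simpa [det_neg] using ⟨hM.det_pos.ne', hS.det_pos.ne'⟩

section

variable {R m : Type*} [Ring R] [Fintype m] [DecidableEq m]

instance invertibleFromBlocksZeroOne (T L : Matrix m m R) [Invertible T] :
    Invertible (fromBlocks (0 : Matrix m m R) 1 T L) where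
  invOf := fromBlocks (-(⅟T * L)) (⅟T) 1 0
  invOf_mul_self := by simp [fromBlocks_multiply]
  mul_invOf_self := by simp [fromBlocks_multiply]

theorem invOf_fromBlocks_zero_one (T L : Matrix m m R) [Invertible T] :
    ⅟(fromBlocks (0 : Matrix m m R) 1 T L) = fromBlocks (-(⅟T * L)) (⅟T) 1 0 :=
  rfl

end

theorem det_fromBlocks_fromBlocks_zero_one {R m n p : Type*} [CommRing R] [Fintype m]
    [DecidableEq m] [Fintype n] [DecidableEq n] [Fintype p] [DecidableEq p]
    (P : Matrix (n ⊕ p) (n ⊕ p) R) (Q : Matrix n m R) (S : Matrix m n R)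
    (T L : Matrix m m R) [Invertible T] :
    (fromBlocks P (fromBlocks Q 0 0 0) (fromBlocks S 0 0 0) (fromBlocks 0 1 T L)).det =
      (fromBlocks (0 : Matrix m m R) 1 T L).det *
        (P + fromBlocks (Q * (⅟T * L) * S) 0 0 0).det := by
  rw [det_fromBlocks₂₂, invOf_fromBlocks_zero_one]
  congr 2
  simp [fromBlocks_multiply, Matrix.mul_assoc, sub_eq_add_neg, fromBlocks_neg]

end Matrix

theorem newton_system_matrix_nonsingular (m n p : ℕ)
    (t lam : Fin m → ℝ) (ht : ∀ i, 0 < t i) (hlam : ∀ i, 0 < lam i)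
    (C : Matrix (Fin m) (Fin n) ℝ)
    (H : Matrix (Fin n) (Fin n) ℝ) (hH : H.PosDef)
    (A : Matrix (Fin p) (Fin n) ℝ) (hA : A.rank = p) :
    (Matrix.fromBlocks
      (Matrix.fromBlocks H (-Aᵀ) (-A) 0)
      (Matrix.fromBlocks (-Cᵀ) 0 0 0)
      (Matrix.fromBlocks (-C) 0 0 0)
      (Matrix.fromBlocks 0 (1 : Matrix (Fin m) (Fin m) ℝ)
        (Matrix.diagonal t) (Matrix.diagonal lam))).det ≠ 0 := by
  let : Invertible (diagonal t) :=
    invertibleOfRightInverse _ (diagonal t⁻¹) (by simp [(ht _).ne'])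
  have hW : (diagonal (t⁻¹ * lam)).PosSemidef :=
    posSemidef_diagonal_iff.2 fun i => (mul_pos (inv_pos.2 (ht i)) (hlam i)).le
  have hHW : (H + Cᵀ * diagonal (t⁻¹ * lam) * C).PosDef := by
    simpa using hH.add_posSemidef (hW.conjTranspose_mul_mul_same C)
  have hAinj : Function.Injective A.vecMul := vecMul_injective_iff.2 <|
    linearIndependent_row_of_rank_eq_card (by rw [hA, Fintype.card_fin])
  have hTL : ⅟(diagonal t) * diagonal lam = diagonal (t⁻¹ * lam) := diagonal_mul_diagonal _ _
  rw [det_fromBlocks_fromBlocks_zero_one, hTL, fromBlocks_add]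
  refine mul_ne_zero (isUnit_det_of_invertible _).ne_zero ?_
  simpa using det_fromBlocks_neg_transpose_ne_zero hHW hAinj
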